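/- arXiv:1610.01137 — 4 statements merged into one kernel-verified Lean document; each statement's English description precedes it below -/
import Mathlib

section
/- Let 0 < λ, μ ≤ 1 with λ + μ > 1, let f : [a,b] → ℝ be λ-Hölder continuous and g : [a,b] → ℝ be μ-Hölder continuous. Then for every ε > 0 there is δ > 0 such that for every partition a = t₀ < t₁ < ⋯ < t_n = b of mesh less than δ and every choice of tags ξ_i ∈ [t_i, t_{i+1}] (0 ≤ i ≤ n−1), one has |Σ_{i=0}^{n−1} f(ξ_i)(g(t_{i+1}) − g(t_i)) − ∫_a^b f dg| < ε; that is, tagged Riemann sums with arbitrary tags converge to the Young integral as the mesh tends to 0. -/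
/-!
Removing from a partition `t₀ < ⋯ < tₙ` (`n ≥ 2`) an interior point `t_{j+1}` with
`t_{j+2} - t_j ≤ 2 (tₙ - t₀) / (n - 1)` changes the Riemann–Stieltjes sum by
`(g t_{j+2} - g t_{j+1}) • (f t_{j+1} - f t_j)`, which is at most `C (t_{j+2} - t_j) ^ θ` with
`θ = λ + μ > 1`. Removing the points one at a time gives the Young–Loève estimate
`‖S(t) - (g tₙ - g t₀) • f t₀‖ ≤ C 2 ^ θ ζ(θ) (tₙ - t₀) ^ θ`. Applied on each interval of a
partition of mesh `δ`, it bounds the change of the sum under refinement by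
`K ∑ (t_{i+1} - t_i) ^ θ ≤ K δ ^ (θ - 1) (b - a)`; through common refinements the sums are
therefore Cauchy as `δ → 0`. Moving the tags inside the intervals costs another
`C ∑ (t_{i+1} - t_i) ^ θ`.
-/

open Set MeasureTheory Filter

def HolderOn {B : Type*} [NormedAddCommGroup B] (f : ℝ → B) (a b lam : ℝ) : Prop :=
  ∃ C : ℝ, ∀ s ∈ Icc a b, ∀ t ∈ Icc a b, ‖f t - f s‖ ≤ C * |t - s| ^ lam

def IsYoungIntegral {B : Type*} [NormedAddCommGroup B] [NormedSpace ℝ B]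
    (f : ℝ → B) (g : ℝ → ℝ) (a b : ℝ) (I : B) : Prop :=
  ∀ ε > 0, ∃ δ > 0, ∀ (n : ℕ) (t : ℕ → ℝ),
    t 0 = a → t n = b → (∀ i < n, t i < t (i + 1)) → (∀ i < n, t (i + 1) - t i < δ) →
    ‖(∑ i ∈ Finset.range n, (g (t (i + 1)) - g (t i)) • f (t i)) - I‖ < ε

open Topology

section Partitions

variable {α : Type*}

def removeNth (t : ℕ → α) (k : ℕ) : ℕ → α := fun i => t (if i < k then i else i + 1)

lemma removeNth_of_lt (t : ℕ → α) {k i : ℕ} (h : i < k) : removeNth t k i = t i := by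
  simp [removeNth, h]

lemma removeNth_of_le (t : ℕ → α) {k i : ℕ} (h : k ≤ i) : removeNth t k i = t (i + 1) := by
  simp [removeNth, h.not_gt]

variable [LinearOrder α]

lemma mem_Icc_of_lt_succ {t : ℕ → α} {n : ℕ} (ht : ∀ i < n, t i < t (i + 1)) {i : ℕ}
    (hi : i ≤ n) : t i ∈ Icc (t 0) (t n) :=
  have hmono := (strictMonoOn_Iic_of_lt_succ ht).monotoneOn
  ⟨hmono (Nat.zero_le n) hi (Nat.zero_le i), hmono hi self_mem_Iic hi⟩

lemma removeNth_lt_succ {t : ℕ → α} {n : ℕ} (ht : ∀ i < n + 1, t i < t (i + 1)) (k : ℕ) :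
    ∀ i < n, removeNth t k i < removeNth t k (i + 1) := by
  intro i hi
  rcases lt_trichotomy (i + 1) k with h | h | h
  · rw [removeNth_of_lt t h, removeNth_of_lt t (by omega)]
    exact ht i (by omega)
  · rw [removeNth_of_lt t (by omega), removeNth_of_le t h.ge]
    exact (ht i (by omega)).trans (ht (i + 1) (by omega))
  · rw [removeNth_of_le t (by omega), removeNth_of_le t h.le]
    exact ht (i + 1) (by omega)

lemma Finset.exists_enumeration (A : Finset α) (hA : A.Nonempty) :
    ∃ (N : ℕ) (r : ℕ → α), (∀ i < N, r i < r (i + 1)) ∧ (∀ i ≤ N, r i ∈ A) ∧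
      ∀ x ∈ A, ∃ j ≤ N, r j = x := by
  obtain ⟨N, hN⟩ := Nat.exists_eq_add_one_of_ne_zero hA.card_pos.ne'
  set e := A.orderEmbOfFin hN
  refine ⟨N, fun i => e ⟨min i N, by omega⟩, fun i hi => e.strictMono ?_,
    fun i _ => A.orderEmbOfFin_mem hN _, fun x hx => ?_⟩
  · rw [Fin.mk_lt_mk]; omega
  · rw [← Finset.mem_coe, ← A.range_orderEmbOfFin hN] at hx
    obtain ⟨k, rfl⟩ := hx
    exact ⟨k, by omega, by simp [e, Nat.min_eq_left (Nat.lt_succ_iff.1 k.2)]⟩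

lemma exists_index_of_forall_exists_eq {N n : ℕ} {r t : ℕ → α}
    (hr : ∀ i < N, r i < r (i + 1)) (ht : ∀ i < n, t i < t (i + 1))
    (hrt : ∀ i ≤ n, ∃ j ≤ N, r j = t i) (h0 : t 0 = r 0) (hn : t n = r N) :
    ∃ σ : ℕ → ℕ, σ 0 = 0 ∧ σ n = N ∧ (∀ i < n, σ i < σ (i + 1)) ∧ ∀ i ≤ n, r (σ i) = t i := by
  have hr' := strictMonoOn_Iic_of_lt_succ hr
  choose! σ hσN hσ using hrt
  refine ⟨σ, hr'.injOn (hσN 0 (Nat.zero_le n)) (Nat.zero_le N) ((hσ 0 (Nat.zero_le n)).trans h0),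
    hr'.injOn (hσN n le_rfl) self_mem_Iic ((hσ n le_rfl).trans hn), fun i hi => ?_, hσ⟩
  rw [← hr'.lt_iff_lt (hσN i hi.le) (hσN (i + 1) hi), hσ i hi.le, hσ (i + 1) hi]
  exact ht i hi

lemma exists_common_refinement {n m : ℕ} {t s : ℕ → α}
    (ht : ∀ i < n, t i < t (i + 1)) (hs : ∀ i < m, s i < s (i + 1))
    (h0 : t 0 = s 0) (hnm : t n = s m) :
    ∃ (N : ℕ) (r : ℕ → α) (σ τ : ℕ → ℕ), (∀ i < N, r i < r (i + 1)) ∧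
      (σ 0 = 0 ∧ σ n = N ∧ (∀ i < n, σ i < σ (i + 1)) ∧ ∀ i ≤ n, r (σ i) = t i) ∧
      (τ 0 = 0 ∧ τ m = N ∧ (∀ i < m, τ i < τ (i + 1)) ∧ ∀ i ≤ m, r (τ i) = s i) := by
  classical
  set A := (Finset.range (n + 1)).image t ∪ (Finset.range (m + 1)).image s
  have htA : ∀ i ≤ n, t i ∈ A := fun i hi =>
    Finset.mem_union_left _ (Finset.mem_image_of_mem t (Finset.mem_range_succ_iff.2 hi))
  have hsA : ∀ i ≤ m, s i ∈ A := fun i hi =>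
    Finset.mem_union_right _ (Finset.mem_image_of_mem s (Finset.mem_range_succ_iff.2 hi))
  have hA : ∀ x ∈ A, x ∈ Icc (t 0) (t n) := by
    simp only [A, Finset.mem_union, Finset.mem_image, Finset.mem_range_succ_iff]
    rintro x (⟨i, hi, rfl⟩ | ⟨i, hi, rfl⟩)
    · exact mem_Icc_of_lt_succ ht hi
    · exact h0 ▸ hnm ▸ mem_Icc_of_lt_succ hs hi
  obtain ⟨N, r, hr, hrA, hAr⟩ := A.exists_enumeration ⟨t 0, htA 0 (Nat.zero_le n)⟩
  have hrmono := (strictMonoOn_Iic_of_lt_succ hr).monotoneOn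
  have hr0 : t 0 = r 0 := by
    obtain ⟨j, hj, hrj⟩ := hAr _ (htA 0 (Nat.zero_le n))
    exact le_antisymm (hA _ (hrA 0 (Nat.zero_le N))).1
      (hrj ▸ hrmono (Nat.zero_le N) hj (Nat.zero_le j))
  have hrN : t n = r N := by
    obtain ⟨j, hj, hrj⟩ := hAr _ (htA n le_rfl)
    exact le_antisymm (hrj ▸ hrmono hj self_mem_Iic hj) (hA _ (hrA N le_rfl)).2
  obtain ⟨σ, hσ⟩ := exists_index_of_forall_exists_eq hr ht (fun i hi => hAr _ (htA i hi)) hr0 hrN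
  obtain ⟨τ, hτ⟩ := exists_index_of_forall_exists_eq hr hs (fun i hi => hAr _ (hsA i hi))
    (h0 ▸ hr0) (hnm ▸ hrN)
  exact ⟨N, r, σ, τ, hr, hσ, hτ⟩

end Partitions

section Holder

variable {B : Type*} [NormedAddCommGroup B]

lemma HolderOn.exists_nonneg {f : ℝ → B} {a b lam : ℝ} (hf : HolderOn f a b lam) :
    ∃ C, 0 ≤ C ∧ ∀ s ∈ Icc a b, ∀ u ∈ Icc a b, ‖f u - f s‖ ≤ C * |u - s| ^ lam := by
  obtain ⟨C, hC⟩ := hf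
  exact ⟨max C 0, le_max_right _ _, fun s hs u hu => (hC s hs u hu).trans <|
    mul_le_mul_of_nonneg_right (le_max_left _ _) (by positivity)⟩

variable {f : ℝ → B} {g : ℝ → ℝ} {a b lam μ Cf Cg p q : ℝ}

lemma norm_sub_le_of_mem_Icc (hCf : 0 ≤ Cf) (hlam : 0 ≤ lam)
    (hf : ∀ s ∈ Icc a b, ∀ u ∈ Icc a b, ‖f u - f s‖ ≤ Cf * |u - s| ^ lam)
    (hpq : Icc p q ⊆ Icc a b) {s u : ℝ} (hs : s ∈ Icc p q) (hu : u ∈ Icc p q) :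
    ‖f u - f s‖ ≤ Cf * (q - p) ^ lam := by
  refine (hf s (hpq hs) u (hpq hu)).trans (mul_le_mul_of_nonneg_left ?_ hCf)
  rw [← Real.dist_eq]
  exact Real.rpow_le_rpow dist_nonneg (Real.dist_le_of_mem_Icc hu hs) hlam

variable [NormedSpace ℝ B]

lemma norm_smul_sub_le_of_mem_Icc (hCf : 0 ≤ Cf) (hCg : 0 ≤ Cg) (hlam : 0 ≤ lam) (hμ : 0 ≤ μ)
    (hlamμ : lam + μ ≠ 0)
    (hf : ∀ s ∈ Icc a b, ∀ u ∈ Icc a b, ‖f u - f s‖ ≤ Cf * |u - s| ^ lam)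
    (hg : ∀ s ∈ Icc a b, ∀ u ∈ Icc a b, ‖g u - g s‖ ≤ Cg * |u - s| ^ μ)
    (hpq : Icc p q ⊆ Icc a b) {x y z w : ℝ} (hx : x ∈ Icc p q) (hy : y ∈ Icc p q)
    (hz : z ∈ Icc p q) (hw : w ∈ Icc p q) :
    ‖(g y - g x) • (f w - f z)‖ ≤ Cf * Cg * (q - p) ^ (lam + μ) := by
  have hqp : 0 ≤ q - p := sub_nonneg.2 (hx.1.trans hx.2)
  calc ‖(g y - g x) • (f w - f z)‖ = ‖g y - g x‖ * ‖f w - f z‖ := norm_smul _ _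
    _ ≤ (Cg * (q - p) ^ μ) * (Cf * (q - p) ^ lam) :=
      mul_le_mul (norm_sub_le_of_mem_Icc hCg hμ hg hpq hx hy)
        (norm_sub_le_of_mem_Icc hCf hlam hf hpq hz hw) (norm_nonneg _) (by positivity)
    _ = Cf * Cg * (q - p) ^ (lam + μ) := by
      rw [Real.rpow_add' hqp hlamμ]
      ring

end Holder

lemma exists_two_steps_le {t : ℕ → ℝ} {n : ℕ} (hn : 0 < n) (ht : ∀ i < n + 1, t i ≤ t (i + 1)) :
    ∃ j < n, n * (t (j + 2) - t j) ≤ 2 * (t (n + 1) - t 0) := by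
  have hsum : ∑ k ∈ Finset.range n, (t (k + 2) - t k) = (t (n + 1) - t 1) + (t n - t 0) := by
    rw [← Finset.sum_range_sub (fun k => t (k + 1)), ← Finset.sum_range_sub t,
      ← Finset.sum_add_distrib]
    exact Finset.sum_congr rfl fun k _ => by ring
  have hle : ∑ k ∈ Finset.range n, n * (t (k + 2) - t k) ≤
      ∑ _k ∈ Finset.range n, 2 * (t (n + 1) - t 0) := by
    rw [← Finset.mul_sum, hsum, Finset.sum_const, Finset.card_range, nsmul_eq_mul]
    have := ht 0 (by omega)
    have := ht n (by omega)
    gcongr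
    linarith
  obtain ⟨j, hj, hjle⟩ := Finset.exists_le_of_sum_le (Finset.nonempty_range_iff.2 hn.ne') hle
  exact ⟨j, Finset.mem_range.1 hj, hjle⟩

lemma sum_rpow_sub_le_of_mesh {t : ℕ → ℝ} {n : ℕ} {θ δ : ℝ} (hθ : 1 ≤ θ)
    (ht : ∀ i < n, t i ≤ t (i + 1)) (hmesh : ∀ i < n, t (i + 1) - t i ≤ δ) :
    ∑ i ∈ Finset.range n, (t (i + 1) - t i) ^ θ ≤ δ ^ (θ - 1) * (t n - t 0) := by
  rw [← Finset.sum_range_sub, Finset.mul_sum]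
  refine Finset.sum_le_sum fun i hi => ?_
  have hi := Finset.mem_range.1 hi
  have hstep : 0 ≤ t (i + 1) - t i := sub_nonneg.2 (ht i hi)
  calc (t (i + 1) - t i) ^ θ = (t (i + 1) - t i) ^ (θ - 1) * (t (i + 1) - t i) := by
        rw [← Real.rpow_add_one' hstep (by linarith), sub_add_cancel]
    _ ≤ δ ^ (θ - 1) * (t (i + 1) - t i) := by
        gcongr
        exact hmesh i hi

lemma exists_pos_mul_rpow_lt (M : ℝ) {p ε : ℝ} (hp : 0 < p) (hε : 0 < ε) :
    ∃ δ > 0, M * δ ^ p < ε := by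
  have hlim : Tendsto (fun δ : ℝ => M * δ ^ p) (𝓝[>] 0) (𝓝 0) := by
    have := ((Real.continuousAt_rpow_const 0 p (Or.inr hp.le)).tendsto.const_mul M).mono_left
      (nhdsWithin_le_nhds (s := Ioi 0))
    simpa [Real.zero_rpow hp.ne'] using this
  obtain ⟨δ, hδε, hδ⟩ := ((hlim.eventually (gt_mem_nhds hε)).and self_mem_nhdsWithin).exists
  exact ⟨δ, hδ, hδε⟩

noncomputable def uniformPartition (a b : ℝ) (k i : ℕ) : ℝ := a + i * ((b - a) / k)

lemma eventually_uniformPartition {a b δ : ℝ} (hab : a < b) (hδ : 0 < δ) :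
    ∀ᶠ k in atTop, uniformPartition a b k 0 = a ∧ uniformPartition a b k k = b ∧
      (∀ i < k, uniformPartition a b k i < uniformPartition a b k (i + 1)) ∧
      ∀ i < k, uniformPartition a b k (i + 1) - uniformPartition a b k i ≤ δ := by
  filter_upwards [eventually_gt_atTop 0,
    (tendsto_const_div_atTop_nhds_zero_nat (b - a)).eventually (ge_mem_nhds hδ)] with k hk hkδ
  have hstep : ∀ i, uniformPartition a b k (i + 1) - uniformPartition a b k i = (b - a) / k :=
    fun i => by simp only [uniformPartition]; push_cast; ring
  have hpos : 0 < (b - a) / k := div_pos (sub_pos.2 hab) (by exact_mod_cast hk)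
  refine ⟨by simp [uniformPartition], by simp only [uniformPartition]; field_simp; ring,
    fun i _ => sub_pos.1 (hstep i ▸ hpos), fun i _ => (hstep i).trans_le hkδ⟩

section StieltjesSums

variable {B : Type*} [NormedAddCommGroup B] [NormedSpace ℝ B]

def stieltjesSum (f : ℝ → B) (g : ℝ → ℝ) (t : ℕ → ℝ) (n : ℕ) : B :=
  ∑ i ∈ Finset.range n, (g (t (i + 1)) - g (t i)) • f (t i)

lemma stieltjesSum_add (f : ℝ → B) (g : ℝ → ℝ) (t : ℕ → ℝ) (n d : ℕ) :
    stieltjesSum f g t (n + d) =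
      stieltjesSum f g t n + stieltjesSum f g (fun i => t (n + i)) d := by
  simp only [stieltjesSum, Finset.sum_range_add]
  rfl

lemma stieltjesSum_succ (f : ℝ → B) (g : ℝ → ℝ) (t : ℕ → ℝ) (n : ℕ) :
    stieltjesSum f g t (n + 1) = stieltjesSum f g t n + (g (t (n + 1)) - g (t n)) • f (t n) :=
  Finset.sum_range_succ _ _

lemma stieltjesSum_succ_sub_stieltjesSum_removeNth (f : ℝ → B) (g : ℝ → ℝ) (t : ℕ → ℝ)
    {j n : ℕ} (hjn : j < n) :
    stieltjesSum f g t (n + 1) - stieltjesSum f g (removeNth t (j + 1)) n =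
      (g (t (j + 2)) - g (t (j + 1))) • (f (t (j + 1)) - f (t j)) := by
  induction n, hjn using Nat.le_induction with
  | base =>
    have hprefix : stieltjesSum f g (removeNth t (j + 1)) j = stieltjesSum f g t j :=
      Finset.sum_congr rfl fun i hi => by
        have hij := Finset.mem_range.1 hi
        rw [removeNth_of_lt t (show i < j + 1 by omega),
          removeNth_of_lt t (show i + 1 < j + 1 by omega)]
    rw [stieltjesSum_succ f g t (j + 1), stieltjesSum_succ f g t j,
      stieltjesSum_succ f g (removeNth t (j + 1)) j, hprefix, removeNth_of_lt t j.lt_succ_self,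
      removeNth_of_le t le_rfl, show j + 1 + 1 = j + 2 from rfl]
    simp only [smul_sub, sub_smul]
    abel
  | succ n hjn ih =>
    rw [stieltjesSum_succ f g t (n + 1), stieltjesSum_succ f g (removeNth t (j + 1)) n,
      removeNth_of_le t (show j + 1 ≤ n by omega), removeNth_of_le t (show j + 1 ≤ n + 1 by omega),
      ← ih]
    abel

variable {f : ℝ → B} {g : ℝ → ℝ} {a b lam μ Cf Cg K θ δ : ℝ}

def YoungLoeveBound (f : ℝ → B) (g : ℝ → ℝ) (a b K θ : ℝ) : Prop :=
  ∀ (n : ℕ) (t : ℕ → ℝ), (∀ i < n, t i < t (i + 1)) → (∀ i ≤ n, t i ∈ Icc a b) →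
    ‖stieltjesSum f g t n - (g (t n) - g (t 0)) • f (t 0)‖ ≤ K * (t n - t 0) ^ θ

lemma norm_stieltjesSum_sub_le_removeNth_add (hCf : 0 ≤ Cf) (hCg : 0 ≤ Cg) (hlam : 0 ≤ lam)
    (hμ : 0 ≤ μ) (hlamμ : lam + μ ≠ 0)
    (hf : ∀ s ∈ Icc a b, ∀ u ∈ Icc a b, ‖f u - f s‖ ≤ Cf * |u - s| ^ lam)
    (hg : ∀ s ∈ Icc a b, ∀ u ∈ Icc a b, ‖g u - g s‖ ≤ Cg * |u - s| ^ μ)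
    {n j : ℕ} {t : ℕ → ℝ} (ht : ∀ i < n + 1, t i < t (i + 1))
    (hmem : ∀ i ≤ n + 1, t i ∈ Icc a b) (hjn : j < n) (x : B) :
    ‖stieltjesSum f g t (n + 1) - x‖ ≤
      ‖stieltjesSum f g (removeNth t (j + 1)) n - x‖ + Cf * Cg * (t (j + 2) - t j) ^ (lam + μ) := by
  have hj1 : t (j + 1) ∈ Icc (t j) (t (j + 2)) := ⟨(ht j (by omega)).le, (ht (j + 1) (by omega)).le⟩
  have hj02 := hj1.1.trans hj1.2
  calc ‖stieltjesSum f g t (n + 1) - x‖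
      = ‖(stieltjesSum f g (removeNth t (j + 1)) n - x) +
          (g (t (j + 2)) - g (t (j + 1))) • (f (t (j + 1)) - f (t j))‖ := by
        rw [← stieltjesSum_succ_sub_stieltjesSum_removeNth f g t hjn]
        congr 1
        abel
    _ ≤ _ := (norm_add_le _ _).trans <| add_le_add le_rfl (norm_smul_sub_le_of_mem_Icc hCf hCg hlam
        hμ hlamμ hf hg (Icc_subset_Icc (hmem j (by omega)).1 (hmem (j + 2) (by omega)).2) hj1
        (right_mem_Icc.2 hj02) (left_mem_Icc.2 hj02) hj1)

theorem norm_stieltjesSum_sub_le_of_holder (hCf : 0 ≤ Cf) (hCg : 0 ≤ Cg) (hlam : 0 < lam)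
    (hμ : 0 < μ) (hf : ∀ s ∈ Icc a b, ∀ u ∈ Icc a b, ‖f u - f s‖ ≤ Cf * |u - s| ^ lam)
    (hg : ∀ s ∈ Icc a b, ∀ u ∈ Icc a b, ‖g u - g s‖ ≤ Cg * |u - s| ^ μ) {n : ℕ} {t : ℕ → ℝ}
    (ht : ∀ i < n, t i < t (i + 1)) (hmem : ∀ i ≤ n, t i ∈ Icc a b) :
    ‖stieltjesSum f g t n - (g (t n) - g (t 0)) • f (t 0)‖ ≤
      Cf * Cg * 2 ^ (lam + μ) * (∑ k ∈ Finset.range n, (k : ℝ) ^ (-(lam + μ))) *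
        (t n - t 0) ^ (lam + μ) := by
  set θ := lam + μ
  have hθ : 0 < θ := add_pos hlam hμ
  induction n generalizing t with
  | zero => simp [stieltjesSum]
  | succ n ih =>
    rcases Nat.eq_zero_or_pos n with rfl | hn
    · simp [stieltjesSum, Real.zero_rpow (neg_ne_zero.2 hθ.ne')]
    obtain ⟨j, hjn, hj⟩ := exists_two_steps_le hn fun i hi => (ht i hi).le
    have hprefix := ih (removeNth_lt_succ ht (j + 1))
      fun i hi => hmem _ (by split_ifs <;> omega)
    rw [removeNth_of_lt t j.succ_pos, removeNth_of_le t hjn] at hprefix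
    have hgap : (t (j + 2) - t j) ^ θ ≤ 2 ^ θ * (n : ℝ) ^ (-θ) * (t (n + 1) - t 0) ^ θ := by
      have hD : 0 ≤ t (j + 2) - t j :=
        sub_nonneg.2 ((ht j (by omega)).le.trans (ht (j + 1) (by omega)).le)
      have hΔ : 0 ≤ t (n + 1) - t 0 := sub_nonneg.2 (mem_Icc_of_lt_succ ht le_rfl).1
      have h := Real.rpow_le_rpow (by positivity) hj hθ.le
      rw [Real.mul_rpow n.cast_nonneg hD, Real.mul_rpow zero_le_two hΔ] at h
      rw [Real.rpow_neg n.cast_nonneg, mul_right_comm, ← div_eq_mul_inv,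
        le_div_iff₀ (by positivity)]
      linarith
    calc _ ≤ _ :=
          norm_stieltjesSum_sub_le_removeNth_add hCf hCg hlam.le hμ.le hθ.ne' hf hg ht hmem hjn _
      _ ≤ Cf * Cg * 2 ^ θ * (∑ k ∈ Finset.range n, (k : ℝ) ^ (-θ)) * (t (n + 1) - t 0) ^ θ +
            Cf * Cg * (2 ^ θ * (n : ℝ) ^ (-θ) * (t (n + 1) - t 0) ^ θ) := by gcongr
      _ = _ := by rw [Finset.sum_range_succ]; ring

-- The `k = 0` term is `0 ^ (-(lam + μ)) = 0`, so the series is `ζ(lam + μ)`.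
theorem youngLoeveBound_of_holder (hCf : 0 ≤ Cf) (hCg : 0 ≤ Cg) (hlam : 0 < lam) (hμ : 0 < μ)
    (hsum : 1 < lam + μ) (hf : ∀ s ∈ Icc a b, ∀ u ∈ Icc a b, ‖f u - f s‖ ≤ Cf * |u - s| ^ lam)
    (hg : ∀ s ∈ Icc a b, ∀ u ∈ Icc a b, ‖g u - g s‖ ≤ Cg * |u - s| ^ μ) :
    YoungLoeveBound f g a b (Cf * Cg * 2 ^ (lam + μ) * ∑' k : ℕ, (k : ℝ) ^ (-(lam + μ)))
      (lam + μ) := fun n t ht hmem => by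
  refine (norm_stieltjesSum_sub_le_of_holder hCf hCg hlam hμ hf hg ht hmem).trans ?_
  have hΔ : 0 ≤ t n - t 0 := sub_nonneg.2 (mem_Icc_of_lt_succ ht le_rfl).1
  gcongr
  exact (Real.summable_nat_rpow.2 (by linarith)).sum_le_tsum _ fun k _ => by positivity

theorem norm_stieltjesSum_sub_le_of_refines (hK : YoungLoeveBound f g a b K θ) {N m : ℕ}
    {r t : ℕ → ℝ} {σ : ℕ → ℕ} (hr : ∀ i < N, r i < r (i + 1)) (hrmem : ∀ i ≤ N, r i ∈ Icc a b)
    (hσ0 : σ 0 = 0) (hσm : σ m = N) (hσ : ∀ i < m, σ i < σ (i + 1))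
    (hrσ : ∀ i ≤ m, r (σ i) = t i) :
    ‖stieltjesSum f g r N - stieltjesSum f g t m‖ ≤
      K * ∑ i ∈ Finset.range m, (t (i + 1) - t i) ^ θ := by
  induction m generalizing N with
  | zero =>
    subst hσm
    simp [hσ0, stieltjesSum]
  | succ m ih =>
    subst hσm
    obtain ⟨d, hd⟩ := Nat.exists_eq_add_of_lt (hσ m (by omega))
    have hblock := hK (d + 1) (fun i => r (σ m + i)) (fun i hi => hr _ (by omega))
      (fun i hi => hrmem _ (by omega))
    have hd' : σ m + (d + 1) = σ (m + 1) := by omega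
    simp only [add_zero, hd', hrσ m (by omega), hrσ (m + 1) le_rfl] at hblock
    have hprefix := ih (fun i hi => hr i (by omega)) (fun i hi => hrmem i (by omega)) rfl
      (fun i hi => hσ i (by omega)) (fun i hi => hrσ i (by omega))
    calc ‖stieltjesSum f g r (σ (m + 1)) - stieltjesSum f g t (m + 1)‖
        = ‖(stieltjesSum f g r (σ m) - stieltjesSum f g t m) +
            (stieltjesSum f g (fun i => r (σ m + i)) (d + 1) -
              (g (t (m + 1)) - g (t m)) • f (t m))‖ := by
          rw [← hd', stieltjesSum_add, stieltjesSum_succ f g t m]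
          congr 1
          abel
      _ ≤ K * ∑ i ∈ Finset.range m, (t (i + 1) - t i) ^ θ + K * (t (m + 1) - t m) ^ θ :=
          (norm_add_le _ _).trans (add_le_add hprefix hblock)
      _ = K * ∑ i ∈ Finset.range (m + 1), (t (i + 1) - t i) ^ θ := by
          rw [Finset.sum_range_succ, mul_add]

theorem norm_stieltjesSum_sub_stieltjesSum_le (hK : YoungLoeveBound f g a b K θ) (hK0 : 0 ≤ K)
    (hθ : 1 ≤ θ) {n m : ℕ} {t s : ℕ → ℝ}
    (ht0 : t 0 = a) (htn : t n = b) (ht : ∀ i < n, t i < t (i + 1))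
    (htδ : ∀ i < n, t (i + 1) - t i ≤ δ)
    (hs0 : s 0 = a) (hsm : s m = b) (hs : ∀ i < m, s i < s (i + 1))
    (hsδ : ∀ i < m, s (i + 1) - s i ≤ δ) :
    ‖stieltjesSum f g t n - stieltjesSum f g s m‖ ≤ 2 * K * δ ^ (θ - 1) * (b - a) := by
  obtain ⟨N, r, σ, τ, hr, ⟨hσ0, hσN, hσ, hrσ⟩, ⟨hτ0, hτN, hτ, hrτ⟩⟩ :=
    exists_common_refinement ht hs (ht0.trans hs0.symm) (htn.trans hsm.symm)
  have hr0 : r 0 = a := by rw [← hσ0, hrσ 0 (Nat.zero_le n), ht0]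
  have hrN : r N = b := by rw [← hσN, hrσ n le_rfl, htn]
  have hrmem : ∀ i ≤ N, r i ∈ Icc a b := fun i hi => hr0 ▸ hrN ▸ mem_Icc_of_lt_succ hr hi
  have hrt := (norm_stieltjesSum_sub_le_of_refines hK hr hrmem hσ0 hσN hσ hrσ).trans
    (mul_le_mul_of_nonneg_left (sum_rpow_sub_le_of_mesh hθ (fun i hi => (ht i hi).le) htδ) hK0)
  have hrs := (norm_stieltjesSum_sub_le_of_refines hK hr hrmem hτ0 hτN hτ hrτ).trans
    (mul_le_mul_of_nonneg_left (sum_rpow_sub_le_of_mesh hθ (fun i hi => (hs i hi).le) hsδ) hK0)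
  rw [ht0, htn] at hrt
  rw [hs0, hsm] at hrs
  calc ‖stieltjesSum f g t n - stieltjesSum f g s m‖
      ≤ ‖stieltjesSum f g r N - stieltjesSum f g t n‖ +
          ‖stieltjesSum f g r N - stieltjesSum f g s m‖ := by
        rw [← norm_neg (_ - stieltjesSum f g t n), neg_sub]
        exact norm_sub_le_norm_sub_add_norm_sub _ _ _
    _ ≤ 2 * K * δ ^ (θ - 1) * (b - a) := by linarith

theorem exists_forall_norm_stieltjesSum_sub_le [CompleteSpace B]
    (hK : YoungLoeveBound f g a b K θ) (hK0 : 0 ≤ K) (hθ : 1 < θ) (hab : a < b) :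
    ∃ I : B, ∀ δ > 0, ∀ (n : ℕ) (t : ℕ → ℝ), t 0 = a → t n = b → (∀ i < n, t i < t (i + 1)) →
      (∀ i < n, t (i + 1) - t i ≤ δ) →
        ‖stieltjesSum f g t n - I‖ ≤ 2 * K * δ ^ (θ - 1) * (b - a) := by
  have hcauchy : CauchySeq fun k => stieltjesSum f g (uniformPartition a b k) k := by
    refine Metric.cauchySeq_iff'.2 fun ε hε => ?_
    obtain ⟨δ, hδ, hδε⟩ := exists_pos_mul_rpow_lt (2 * K * (b - a)) (sub_pos.2 hθ) hε
    obtain ⟨k₀, hk₀⟩ := eventually_atTop.1 (eventually_uniformPartition hab hδ)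
    obtain ⟨h0, hn, hmono, hmesh⟩ := hk₀ k₀ le_rfl
    refine ⟨k₀, fun k hk => ?_⟩
    obtain ⟨h0', hn', hmono', hmesh'⟩ := hk₀ k hk
    rw [dist_eq_norm]
    calc _ ≤ 2 * K * δ ^ (θ - 1) * (b - a) := norm_stieltjesSum_sub_stieltjesSum_le hK hK0
          hθ.le h0' hn' hmono' hmesh' h0 hn hmono hmesh
      _ < ε := by linarith
  obtain ⟨I, hI⟩ := cauchySeq_tendsto_of_complete hcauchy
  refine ⟨I, fun δ hδ n t h0 hn ht hmesh => le_of_tendsto (tendsto_const_nhds.sub hI).norm ?_⟩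
  filter_upwards [eventually_uniformPartition hab hδ] with k ⟨h0', hn', hmono', hmesh'⟩
  exact norm_stieltjesSum_sub_stieltjesSum_le hK hK0 hθ.le h0 hn ht hmesh h0' hn' hmono' hmesh'

theorem norm_taggedSum_sub_stieltjesSum_le (hCf : 0 ≤ Cf) (hCg : 0 ≤ Cg)
    (hlam : 0 ≤ lam) (hμ : 0 ≤ μ) (hlamμ : lam + μ ≠ 0)
    (hf : ∀ s ∈ Icc a b, ∀ u ∈ Icc a b, ‖f u - f s‖ ≤ Cf * |u - s| ^ lam)
    (hg : ∀ s ∈ Icc a b, ∀ u ∈ Icc a b, ‖g u - g s‖ ≤ Cg * |u - s| ^ μ)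
    {n : ℕ} {t ξ : ℕ → ℝ} (hmem : ∀ i ≤ n, t i ∈ Icc a b)
    (hξ : ∀ i < n, ξ i ∈ Icc (t i) (t (i + 1))) :
    ‖∑ i ∈ Finset.range n, (g (t (i + 1)) - g (t i)) • f (ξ i) - stieltjesSum f g t n‖ ≤
      Cf * Cg * ∑ i ∈ Finset.range n, (t (i + 1) - t i) ^ (lam + μ) := by
  rw [stieltjesSum, ← Finset.sum_sub_distrib, Finset.mul_sum]
  refine (norm_sum_le _ _).trans (Finset.sum_le_sum fun i hi => ?_)
  have hi := Finset.mem_range.1 hi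
  have hle := (hξ i hi).1.trans (hξ i hi).2
  rw [← smul_sub]
  exact norm_smul_sub_le_of_mem_Icc hCf hCg hlam hμ hlamμ hf hg
    (Icc_subset_Icc (hmem i hi.le).1 (hmem (i + 1) hi).2) (left_mem_Icc.2 hle)
    (right_mem_Icc.2 hle) (left_mem_Icc.2 hle) (hξ i hi)

theorem exists_forall_norm_taggedSum_sub_lt [CompleteSpace B] (hab : a < b) (hlam : 0 < lam)
    (hμ : 0 < μ) (hsum : 1 < lam + μ) (hf : HolderOn f a b lam) (hg : HolderOn g a b μ) :
    ∃ I : B, ∀ ε > 0, ∃ δ > 0, ∀ (n : ℕ) (t ξ : ℕ → ℝ),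
      t 0 = a → t n = b → (∀ i < n, t i < t (i + 1)) → (∀ i < n, t (i + 1) - t i < δ) →
      (∀ i < n, ξ i ∈ Icc (t i) (t (i + 1))) →
      ‖∑ i ∈ Finset.range n, (g (t (i + 1)) - g (t i)) • f (ξ i) - I‖ < ε := by
  obtain ⟨Cf, hCf, hf⟩ := hf.exists_nonneg
  obtain ⟨Cg, hCg, hg⟩ := hg.exists_nonneg
  set K := Cf * Cg * 2 ^ (lam + μ) * ∑' k : ℕ, (k : ℝ) ^ (-(lam + μ))
  obtain ⟨I, hI⟩ := exists_forall_norm_stieltjesSum_sub_le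
    (youngLoeveBound_of_holder hCf hCg hlam hμ hsum hf hg) (by positivity) hsum hab
  refine ⟨I, fun ε hε => ?_⟩
  obtain ⟨δ, hδ, hδε⟩ := exists_pos_mul_rpow_lt ((2 * K + Cf * Cg) * (b - a)) (sub_pos.2 hsum) hε
  refine ⟨δ, hδ, fun n t ξ h0 hn ht hmesh hξ => ?_⟩
  have hmesh' : ∀ i < n, t (i + 1) - t i ≤ δ := fun i hi => (hmesh i hi).le
  have hS := hI δ hδ n t h0 hn ht hmesh'
  have hξS := (norm_taggedSum_sub_stieltjesSum_le hCf hCg hlam.le hμ.le (by linarith) hf hg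
    (fun i hi => h0 ▸ hn ▸ mem_Icc_of_lt_succ ht hi) hξ).trans
    (mul_le_mul_of_nonneg_left (sum_rpow_sub_le_of_mesh hsum.le (fun i hi => (ht i hi).le)
      hmesh') (mul_nonneg hCf hCg))
  rw [h0, hn] at hξS
  calc _ ≤ ‖∑ i ∈ Finset.range n, (g (t (i + 1)) - g (t i)) • f (ξ i) - stieltjesSum f g t n‖ +
        ‖stieltjesSum f g t n - I‖ := norm_sub_le_norm_sub_add_norm_sub _ _ _
    _ < ε := by linarith

end StieltjesSums

theorem young_integral_tagged_riemann_sums_general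
    (a b : ℝ) (hab : a < b) (lam μ : ℝ)
    (hlam0 : 0 < lam) (hμ0 : 0 < μ)
    (hsum : 1 < lam + μ)
    (f g : ℝ → ℝ) (hf : HolderOn f a b lam) (hg : HolderOn g a b μ) :
    ∃ I : ℝ, IsYoungIntegral f g a b I ∧
      ∀ ε > 0, ∃ δ > 0, ∀ (n : ℕ) (t ξ : ℕ → ℝ),
        t 0 = a → t n = b → (∀ i < n, t i < t (i + 1)) → (∀ i < n, t (i + 1) - t i < δ) →
        (∀ i < n, ξ i ∈ Icc (t i) (t (i + 1))) →
        |(∑ i ∈ Finset.range n, f (ξ i) * (g (t (i + 1)) - g (t i))) - I| < ε := by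
  obtain ⟨I, hI⟩ := exists_forall_norm_taggedSum_sub_lt hab hlam0 hμ0 hsum hf hg
  refine ⟨I, fun ε hε => ?_, fun ε hε => ?_⟩
  · obtain ⟨δ, hδ, h⟩ := hI ε hε
    exact ⟨δ, hδ, fun n t h0 hn ht hmesh =>
      h n t t h0 hn ht hmesh fun i hi => ⟨le_rfl, (ht i hi).le⟩⟩
  · simpa only [smul_eq_mul, Real.norm_eq_abs, mul_comm (g _ - g _)] using hI ε hε

theorem young_integral_tagged_riemann_sums
    (a b : ℝ) (hab : a < b) (lam μ : ℝ)
    (hlam0 : 0 < lam) (hlam1 : lam ≤ 1) (hμ0 : 0 < μ) (hμ1 : μ ≤ 1)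
    (hsum : 1 < lam + μ)
    (f g : ℝ → ℝ) (hf : HolderOn f a b lam) (hg : HolderOn g a b μ) :
    ∃ I : ℝ, IsYoungIntegral f g a b I ∧
      ∀ ε > 0, ∃ δ > 0, ∀ (n : ℕ) (t ξ : ℕ → ℝ),
        t 0 = a → t n = b → (∀ i < n, t i < t (i + 1)) → (∀ i < n, t (i + 1) - t i < δ) →
        (∀ i < n, ξ i ∈ Icc (t i) (t (i + 1))) →
        |(∑ i ∈ Finset.range n, f (ξ i) * (g (t (i + 1)) - g (t i))) - I| < ε :=
  young_integral_tagged_riemann_sums_general a b hab lam μ hlam0 hμ0 hsum f g hf hg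
end

section
/- Let E and F be Banach spaces and let ι : F → E be an injective continuous linear map. Let G : E → F satisfy ‖G(ω + ι h) − G(ω)‖_F ≤ c‖h‖_F for all ω ∈ E and h ∈ F, where 0 ≤ c < 1. Define Γ : E → E by Γ(ω) := ω + ι(G(ω)). Then Γ is a bijection of E; that is, there exists a unique map Λ : E → E with Γ(Λ(ω)) = Λ(Γ(ω)) = ω for all ω ∈ E. -/
open Set MeasureTheory Filter

theorem perturbation_of_identity_bijective
    {E F : Type*} [NormedAddCommGroup E] [NormedSpace ℝ E] [CompleteSpace E]
    [NormedAddCommGroup F] [NormedSpace ℝ F] [CompleteSpace F]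
    (ι : F →L[ℝ] E) (hι : Function.Injective ι)
    (G : E → F) (c : ℝ) (hc0 : 0 ≤ c) (hc1 : c < 1)
    (hG : ∀ (ω : E) (h : F), ‖G (ω + ι h) - G ω‖ ≤ c * ‖h‖) :
    Function.Bijective (fun ω : E => ω + ι (G ω)) ∧
      ∃! Λ : E → E, ∀ ω : E,
        (Λ ω + ι (G (Λ ω)) = ω) ∧ Λ (ω + ι (G ω)) = ω := by
  set Γ : E → E := fun ω => ω + ι (G ω) with hΓdef
  have hinj : Function.Injective Γ := by
    intro a b hab
    have hab' : a + ι (G a) = b + ι (G b) := hab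
    have hb : b = a + ι (G a - G b) := by
      rw [map_sub, add_sub]
      exact eq_sub_of_add_eq hab'.symm
    have h1 : ‖G b - G a‖ ≤ c * ‖G a - G b‖ := by
      have := hG a (G a - G b)
      rwa [← hb] at this
    rw [norm_sub_rev] at h1
    have h0 : G a - G b = 0 := by
      by_contra hne
      have hpos : 0 < ‖G a - G b‖ := norm_pos_iff.mpr hne
      nlinarith
    have : G a = G b := by rwa [sub_eq_zero] at h0
    have : a = b := by
      have := hab'
      rw [‹G a = G b›] at this
      exact add_right_cancel this
    exact this
  have hsurj : Function.Surjective Γ := by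
    intro ω
    set Φ : F → F := fun h => G (ω - ι h) with hΦdef
    have hlip : LipschitzWith c.toNNReal Φ := by
      intro h₁ h₂
      have key : ‖Φ h₁ - Φ h₂‖ ≤ c * ‖h₂ - h₁‖ := by
        have := hG (ω - ι h₂) (h₂ - h₁)
        have heq : (ω - ι h₂) + ι (h₂ - h₁) = ω - ι h₁ := by
          rw [map_sub]; abel
        rwa [heq] at this
      rw [edist_dist, edist_dist, dist_eq_norm, dist_eq_norm]
      rw [← ENNReal.ofReal_coe_nnreal]
      rw [← ENNReal.ofReal_mul (by positivity)]
      apply ENNReal.ofReal_le_ofReal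
      calc ‖Φ h₁ - Φ h₂‖ ≤ c * ‖h₂ - h₁‖ := key
        _ = (c.toNNReal : ℝ) * ‖h₁ - h₂‖ := by
            rw [Real.coe_toNNReal c hc0, norm_sub_rev]
    have hcontr : ContractingWith c.toNNReal Φ := by
      constructor
      · exact_mod_cast Real.toNNReal_lt_one.mpr hc1
      · exact hlip
    obtain ⟨h, hfix, -⟩ := hcontr.exists_fixedPoint 0 (edist_ne_top _ _)
    refine ⟨ω - ι h, ?_⟩
    have : G (ω - ι h) = h := hfix
    show (ω - ι h) + ι (G (ω - ι h)) = ω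
    rw [this]; abel
  have hbij : Function.Bijective Γ := ⟨hinj, hsurj⟩
  refine ⟨hbij, ?_⟩
  refine ⟨Function.invFun Γ, ?_, ?_⟩
  · intro ω
    constructor
    · exact Function.rightInverse_invFun hsurj ω
    · show Function.invFun Γ (Γ ω) = ω
      exact Function.leftInverse_invFun hinj ω
  · intro Λ' hΛ'
    funext ω
    obtain ⟨x, rfl⟩ := hsurj ω
    have h1 : Λ' (x + ι (G x)) = x := (hΛ' x).2
    have h2 : Function.invFun Γ (Γ x) = x := Function.leftInverse_invFun hinj x
    exact h1.trans h2.symm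
end

section
/- Let B₁ and B₂ be Banach spaces and let f : B₁ → B₂ be twice continuously Fréchet differentiable with ‖f′(x)‖ ≤ M₁ and ‖f″(x)‖ ≤ M₂ for all x ∈ B₁. Then for all x₁, x₂, y₁, y₂ ∈ B₁, ‖f(y₂) − f(y₁) − f(x₂) + f(x₁)‖ ≤ M₁ ‖y₂ − y₁ − x₂ + x₁‖ + M₂ (‖y₁ − x₁‖ + ‖y₂ − x₂‖) ‖x₂ − x₁‖. -/
/-!
Set `p t = x₁ + t (x₂ - x₁)` and `q t = y₁ + t (y₂ - y₁)`. The left-hand side is `‖φ 1 - φ 0‖`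
for `φ t = f (q t) - f (p t)`, and
`φ' t = f'(q t) (y₂ - y₁ - x₂ + x₁) + (f'(q t) - f'(p t)) (x₂ - x₁)`.
The first term is bounded by `M₁`, the second by the Lipschitz constant `M₂` of `f'` (a bound on
`f''`) times `‖q t - p t‖ ≤ ‖y₁ - x₁‖ + ‖y₂ - x₂‖`; the mean value inequality concludes.
-/

open Set AffineMap

open scoped NNReal

theorem norm_lineMap_sub_lineMap_le {E : Type*} [SeminormedAddCommGroup E] [NormedSpace ℝ E]
    (x₁ x₂ y₁ y₂ : E) {t : ℝ} (ht : t ∈ Icc (0 : ℝ) 1) :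
    ‖lineMap y₁ y₂ t - lineMap x₁ x₂ t‖ ≤ ‖y₁ - x₁‖ + ‖y₂ - x₂‖ := by
  rw [← vsub_eq_sub, lineMap_vsub_lineMap, lineMap_apply_module, vsub_eq_sub, vsub_eq_sub]
  calc ‖(1 - t) • (y₁ - x₁) + t • (y₂ - x₂)‖
      ≤ (1 - t) * ‖y₁ - x₁‖ + t * ‖y₂ - x₂‖ := by
        refine (norm_add_le _ _).trans_eq ?_
        rw [norm_smul_of_nonneg (sub_nonneg.2 ht.2), norm_smul_of_nonneg ht.1]
    _ ≤ ‖y₁ - x₁‖ + ‖y₂ - x₂‖ := by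
        nlinarith [ht.1, ht.2, norm_nonneg (y₁ - x₁), norm_nonneg (y₂ - x₂)]

theorem norm_sub_sub_add_le_of_hasFDerivAt_of_lipschitzWith
    {E F : Type*} [NormedAddCommGroup E] [NormedSpace ℝ E] [NormedAddCommGroup F] [NormedSpace ℝ F]
    {f : E → F} {f' : E → E →L[ℝ] F} {M₁ : ℝ} {K : ℝ≥0}
    (hf : ∀ x, HasFDerivAt f (f' x) x) (hM₁ : ∀ x, ‖f' x‖ ≤ M₁) (hK : LipschitzWith K f')
    (x₁ x₂ y₁ y₂ : E) :
    ‖f y₂ - f y₁ - f x₂ + f x₁‖ ≤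
      M₁ * ‖y₂ - y₁ - x₂ + x₁‖ + K * (‖y₁ - x₁‖ + ‖y₂ - x₂‖) * ‖x₂ - x₁‖ := by
  set p : ℝ →ᵃ[ℝ] E := lineMap x₁ x₂
  set q : ℝ →ᵃ[ℝ] E := lineMap y₁ y₂
  have hderiv (t : ℝ) : HasDerivAt (fun t => f (q t) - f (p t))
      (f' (q t) (y₂ - y₁) - f' (p t) (x₂ - x₁)) t :=
    ((hf _).comp_hasDerivAt t hasDerivAt_lineMap).sub ((hf _).comp_hasDerivAt t hasDerivAt_lineMap)
  have hbound : ∀ t ∈ Ico (0 : ℝ) 1, ‖f' (q t) (y₂ - y₁) - f' (p t) (x₂ - x₁)‖ ≤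
      M₁ * ‖y₂ - y₁ - x₂ + x₁‖ + K * (‖y₁ - x₁‖ + ‖y₂ - x₂‖) * ‖x₂ - x₁‖ := by
    intro t ht
    have hsplit : f' (q t) (y₂ - y₁) - f' (p t) (x₂ - x₁) =
        f' (q t) (y₂ - y₁ - x₂ + x₁) + (f' (q t) - f' (p t)) (x₂ - x₁) := by
      rw [sub_apply, sub_add, map_sub (f' (q t)) (y₂ - y₁)]
      abel
    have hlip : ‖f' (q t) - f' (p t)‖ ≤ K * (‖y₁ - x₁‖ + ‖y₂ - x₂‖) :=
      (hK.norm_sub_le _ _).trans <| mul_le_mul_of_nonneg_left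
        (norm_lineMap_sub_lineMap_le x₁ x₂ y₁ y₂ (Ico_subset_Icc_self ht)) K.coe_nonneg
    rw [hsplit]
    refine (norm_add_le _ _).trans (add_le_add ?_ ?_)
    · exact (f' (q t)).le_of_opNorm_le (hM₁ _) _
    · exact (f' (q t) - f' (p t)).le_of_opNorm_le hlip _
  have hmvt := norm_image_sub_le_of_norm_deriv_le_segment_01'
    (fun t _ => (hderiv t).hasDerivWithinAt) hbound
  simp only [p, q, lineMap_apply_one, lineMap_apply_zero] at hmvt
  convert hmvt using 2
  abel

theorem four_point_estimate_C2
    {B₁ B₂ : Type*} [NormedAddCommGroup B₁] [NormedSpace ℝ B₁]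
    [NormedAddCommGroup B₂] [NormedSpace ℝ B₂]
    (f : B₁ → B₂) (hf : ContDiff ℝ 2 f)
    (M₁ M₂ : ℝ)
    (hM₁ : ∀ x : B₁, ‖fderiv ℝ f x‖ ≤ M₁)
    (hM₂ : ∀ x : B₁, ‖fderiv ℝ (fderiv ℝ f) x‖ ≤ M₂)
    (x₁ x₂ y₁ y₂ : B₁) :
    ‖f y₂ - f y₁ - f x₂ + f x₁‖ ≤
      M₁ * ‖y₂ - y₁ - x₂ + x₁‖ + M₂ * (‖y₁ - x₁‖ + ‖y₂ - x₂‖) * ‖x₂ - x₁‖ := by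
  have hf₁ : Differentiable ℝ f := hf.differentiable (by norm_num)
  have hf₂ : Differentiable ℝ (fderiv ℝ f) :=
    (hf.fderiv_right (m := 1) (by norm_num)).differentiable (by norm_num)
  have hM₂_nonneg : 0 ≤ M₂ := (norm_nonneg (fderiv ℝ (fderiv ℝ f) 0)).trans (hM₂ 0)
  have hlip : LipschitzWith ⟨M₂, hM₂_nonneg⟩ (fderiv ℝ f) :=
    lipschitzWith_of_nnnorm_fderiv_le hf₂ fun x => NNReal.coe_le_coe.1 (hM₂ x)
  exact norm_sub_sub_add_le_of_hasFDerivAt_of_lipschitzWith (fun x => (hf₁ x).hasFDerivAt) hM₁ hlip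
    x₁ x₂ y₁ y₂
end

section
/- Let B₁ and B₂ be Banach spaces and let f : B₁ → B₂ be twice continuously Fréchet differentiable with ‖f′(x)‖ ≤ M₁ and ‖f″(x)‖ ≤ M₂ for all x ∈ B₁. Let β ∈ (0,1] and let x₁, x₂ : [a,b] → B₁ be β-Hölder continuous. Then for all a ≤ s < r ≤ b, ‖f(x₂(r)) − f(x₁(r)) − f(x₂(s)) + f(x₁(s))‖ ≤ M₁ ‖x₂ − x₁‖_{s,r,β} (r−s)^β + M₂ (‖x₁‖_{s,r,β} + ‖x₂‖_{s,r,β}) ‖x₂ − x₁‖_{s,r} (r−s)^β. -/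
open Set MeasureTheory Filter

noncomputable def supNorm {B : Type*} [NormedAddCommGroup B] (x : ℝ → B) (a b : ℝ) : ℝ :=
  ⨆ t : Icc a b, ‖x t‖

noncomputable def holderNorm {B : Type*} [NormedAddCommGroup B] (x : ℝ → B) (a b β : ℝ) : ℝ :=
  ⨆ q : {q : ℝ × ℝ // a ≤ q.1 ∧ q.1 < q.2 ∧ q.2 ≤ b},
    ‖x q.1.2 - x q.1.1‖ / (q.1.2 - q.1.1) ^ β

/-!
Let `pₛ`, `pᵣ` be the segments from `x₁ s` to `x₂ s` and from `x₁ r` to `x₂ r`, run in parallel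
over `[0, 1]`, and `Δₛ = x₂ s - x₁ s`, `Δᵣ = x₂ r - x₁ r`. By the mean value inequality the
four-point difference is bounded by the derivative of `t ↦ f (pᵣ t) - f (pₛ t)`, namely
`f'(pᵣ t) Δᵣ - f'(pₛ t) Δₛ`. Splitting this as
`f'(pᵣ t) (Δᵣ - Δₛ) + (f'(pᵣ t) - f'(pₛ t)) Δₛ` gives the `M₁` term and, through the
Lipschitz bound on `f'` and `‖pᵣ t - pₛ t‖ ≤ ‖x₁ r - x₁ s‖ + ‖x₂ r - x₂ s‖`, the `M₂` term.
The Hölder and sup norms then bound the increments over `[s, r]`.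
-/

open scoped NNReal

section FourPoint

variable {E F : Type*} [NormedAddCommGroup E] [NormedSpace ℝ E]
  [NormedAddCommGroup F] [NormedSpace ℝ F]

lemma norm_apply_sub_apply_le_of_lipschitzWith {L : E → E →L[ℝ] F} {M : ℝ} {K : ℝ≥0}
    (hM : ∀ p, ‖L p‖ ≤ M) (hK : LipschitzWith K L) (p q d e : E) :
    ‖L p d - L q e‖ ≤ M * ‖d - e‖ + K * ‖p - q‖ * ‖e‖ := by
  have hsplit : L p d - L q e = L p (d - e) + (L p - L q) e := by
    simp only [map_sub, sub_apply]
    abel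
  calc ‖L p d - L q e‖ ≤ ‖L p (d - e)‖ + ‖(L p - L q) e‖ := hsplit ▸ norm_add_le _ _
    _ ≤ ‖L p‖ * ‖d - e‖ + ‖L p - L q‖ * ‖e‖ := by
      gcongr <;> exact ContinuousLinearMap.le_opNorm _ _
    _ ≤ M * ‖d - e‖ + K * ‖p - q‖ * ‖e‖ := by
      gcongr
      · exact hM p
      · exact hK.norm_sub_le p q

lemma norm_lineMap_le_add {x y : E} {t : ℝ} (ht : t ∈ Icc 0 1) :
    ‖AffineMap.lineMap x y t‖ ≤ ‖x‖ + ‖y‖ := by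
  obtain ⟨ht₀, ht₁⟩ := ht
  calc ‖AffineMap.lineMap x y t‖ ≤ ‖(1 - t) • x‖ + ‖t • y‖ := by
        rw [AffineMap.lineMap_apply_module]
        exact norm_add_le _ _
    _ = (1 - t) * ‖x‖ + t * ‖y‖ := by
      rw [norm_smul, norm_smul, Real.norm_of_nonneg (by linarith), Real.norm_of_nonneg ht₀]
    _ ≤ ‖x‖ + ‖y‖ := by nlinarith [norm_nonneg x, norm_nonneg y]

lemma norm_four_point_le_of_lipschitzWith_fderiv {f : E → F} {M₁ : ℝ} {K : ℝ≥0}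
    (hf : Differentiable ℝ f) (hM₁ : ∀ x, ‖fderiv ℝ f x‖ ≤ M₁)
    (hK : LipschitzWith K (fderiv ℝ f)) (u₁ u₂ v₁ v₂ : E) :
    ‖f v₂ - f v₁ - f u₂ + f u₁‖ ≤
      M₁ * ‖(v₂ - v₁) - (u₂ - u₁)‖ + K * (‖v₁ - u₁‖ + ‖v₂ - u₂‖) * ‖u₂ - u₁‖ := by
  set pᵥ := AffineMap.lineMap (k := ℝ) v₁ v₂
  set pᵤ := AffineMap.lineMap (k := ℝ) u₁ u₂
  set g : ℝ → F := fun t => f (pᵥ t) - f (pᵤ t)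
  have hg : ∀ t, HasDerivAt g (fderiv ℝ f (pᵥ t) (v₂ - v₁) - fderiv ℝ f (pᵤ t) (u₂ - u₁)) t :=
    fun t => ((hf _).hasFDerivAt.comp_hasDerivAt t AffineMap.hasDerivAt_lineMap).sub
      ((hf _).hasFDerivAt.comp_hasDerivAt t AffineMap.hasDerivAt_lineMap)
  have hgap : ∀ t ∈ Icc (0 : ℝ) 1, ‖pᵥ t - pᵤ t‖ ≤ ‖v₁ - u₁‖ + ‖v₂ - u₂‖ := fun t ht => by
    have hsub := AffineMap.lineMap_vsub_lineMap v₁ v₂ u₁ u₂ t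
    simp only [vsub_eq_sub] at hsub
    exact hsub ▸ norm_lineMap_le_add ht
  have hg₁₀ : g 1 - g 0 = f v₂ - f v₁ - f u₂ + f u₁ := by
    simp only [g, pᵥ, pᵤ, AffineMap.lineMap_apply_one, AffineMap.lineMap_apply_zero]
    abel
  rw [← hg₁₀]
  refine norm_image_sub_le_of_norm_deriv_le_segment_01' (fun t _ => (hg t).hasDerivWithinAt)
    fun t ht => ?_
  calc _ ≤ M₁ * ‖(v₂ - v₁) - (u₂ - u₁)‖ + K * ‖pᵥ t - pᵤ t‖ * ‖u₂ - u₁‖ :=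
        norm_apply_sub_apply_le_of_lipschitzWith hM₁ hK _ _ _ _
    _ ≤ _ := by gcongr; exact hgap t (Ico_subset_Icc_self ht)

end FourPoint

section HolderNorms

variable {B : Type*} [NormedAddCommGroup B] {x y : ℝ → B} {a b β : ℝ}

lemma holderNorm_nonneg : 0 ≤ holderNorm x a b β :=
  Real.iSup_nonneg fun q =>
    div_nonneg (norm_nonneg _) (Real.rpow_nonneg (by linarith [q.2.2.1]) β)

lemma supNorm_nonneg : 0 ≤ supNorm x a b :=
  Real.iSup_nonneg fun _ => norm_nonneg _

namespace HolderOn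

lemma sub (hx : HolderOn x a b β) (hy : HolderOn y a b β) :
    HolderOn (fun t => x t - y t) a b β := by
  obtain ⟨C, hC⟩ := hx
  obtain ⟨D, hD⟩ := hy
  refine ⟨C + D, fun s hs t ht => ?_⟩
  calc ‖(x t - y t) - (x s - y s)‖ = ‖(x t - x s) - (y t - y s)‖ := by rw [sub_sub_sub_comm]
    _ ≤ ‖x t - x s‖ + ‖y t - y s‖ := norm_sub_le _ _
    _ ≤ (C + D) * |t - s| ^ β := by linarith [hC s hs t ht, hD s hs t ht]

lemma mono (hx : HolderOn x a b β) {s r : ℝ} (has : a ≤ s) (hrb : r ≤ b) :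
    HolderOn x s r β := by
  obtain ⟨C, hC⟩ := hx
  have hsub : Icc s r ⊆ Icc a b := Icc_subset_Icc has hrb
  exact ⟨C, fun u hu v hv => hC u (hsub hu) v (hsub hv)⟩

lemma norm_sub_le_holderNorm_mul (hx : HolderOn x a b β) {u v : ℝ}
    (hau : a ≤ u) (huv : u < v) (hvb : v ≤ b) :
    ‖x v - x u‖ ≤ holderNorm x a b β * (v - u) ^ β := by
  obtain ⟨C, hC⟩ := hx
  have hbdd : BddAbove (range fun q : {q : ℝ × ℝ // a ≤ q.1 ∧ q.1 < q.2 ∧ q.2 ≤ b} =>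
      ‖x q.1.2 - x q.1.1‖ / (q.1.2 - q.1.1) ^ β) := by
    refine ⟨C, ?_⟩
    rintro _ ⟨⟨⟨u', v'⟩, hau', huv', hvb'⟩, rfl⟩
    rw [div_le_iff₀ (Real.rpow_pos_of_pos (sub_pos.2 huv') β)]
    simpa only [abs_of_pos (sub_pos.2 huv')] using
      hC u' ⟨hau', by linarith⟩ v' ⟨by linarith, hvb'⟩
  rw [← div_le_iff₀ (Real.rpow_pos_of_pos (sub_pos.2 huv) β)]
  exact le_ciSup hbdd ⟨(u, v), hau, huv, hvb⟩

lemma norm_le_supNorm (hx : HolderOn x a b β) (hβ : 0 ≤ β) {t : ℝ} (ht : t ∈ Icc a b) :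
    ‖x t‖ ≤ supNorm x a b := by
  obtain ⟨C, hC⟩ := hx
  have hab : a ≤ b := ht.1.trans ht.2
  have hbdd : BddAbove (range fun t : Icc a b => ‖x t‖) := by
    refine ⟨‖x a‖ + |C| * (b - a) ^ β, ?_⟩
    rintro _ ⟨⟨u, hu⟩, rfl⟩
    have hdist : |u - a| ^ β ≤ (b - a) ^ β := by
      rw [abs_of_nonneg (sub_nonneg.2 hu.1)]
      exact Real.rpow_le_rpow (sub_nonneg.2 hu.1) (by linarith [hu.2]) hβ
    calc ‖x u‖ ≤ ‖x a‖ + ‖x u - x a‖ := norm_le_insert' _ _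
      _ ≤ ‖x a‖ + C * |u - a| ^ β := by gcongr; exact hC a (left_mem_Icc.2 hab) u hu
      _ ≤ ‖x a‖ + |C| * (b - a) ^ β := by gcongr; exact le_abs_self C
  exact le_ciSup hbdd ⟨t, ht⟩

end HolderOn

end HolderNorms

theorem four_point_holder_estimate_C2_general
    {B₁ B₂ : Type*} [NormedAddCommGroup B₁] [NormedSpace ℝ B₁]
    [NormedAddCommGroup B₂] [NormedSpace ℝ B₂]
    (f : B₁ → B₂) (hf : ContDiff ℝ 2 f)
    (M₁ M₂ : ℝ)
    (hM₁ : ∀ x : B₁, ‖fderiv ℝ f x‖ ≤ M₁)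
    (hM₂ : ∀ x : B₁, ‖fderiv ℝ (fderiv ℝ f) x‖ ≤ M₂)
    (β a b : ℝ) (hβ0 : 0 < β)
    (x₁ x₂ : ℝ → B₁) (hx₁ : HolderOn x₁ a b β) (hx₂ : HolderOn x₂ a b β) :
    ∀ s r : ℝ, a ≤ s → s < r → r ≤ b →
      ‖f (x₂ r) - f (x₁ r) - f (x₂ s) + f (x₁ s)‖ ≤
        M₁ * holderNorm (fun t => x₂ t - x₁ t) s r β * (r - s) ^ β +
          M₂ * (holderNorm x₁ s r β + holderNorm x₂ s r β) *
            supNorm (fun t => x₂ t - x₁ t) s r * (r - s) ^ β := by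
  intro s r has hsr hrb
  have hM₁0 : 0 ≤ M₁ := (norm_nonneg _).trans (hM₁ 0)
  have hM₂0 : 0 ≤ M₂ := (norm_nonneg (fderiv ℝ (fderiv ℝ f) 0)).trans (hM₂ 0)
  have hlip : LipschitzWith M₂.toNNReal (fderiv ℝ f) :=
    lipschitzWith_of_nnnorm_fderiv_le ((hf.fderiv_right le_rfl).differentiable one_ne_zero)
      fun x => by
        simpa only [← NNReal.coe_le_coe, coe_nnnorm, Real.coe_toNNReal _ hM₂0] using hM₂ x
  have hfour := norm_four_point_le_of_lipschitzWith_fderiv (hf.differentiable two_ne_zero)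
    hM₁ hlip (x₁ s) (x₂ s) (x₁ r) (x₂ r)
  rw [Real.coe_toNNReal _ hM₂0] at hfour
  have hd := (hx₂.sub hx₁).mono has hrb
  have hΔ : ‖(x₂ r - x₁ r) - (x₂ s - x₁ s)‖ ≤
      holderNorm (fun t => x₂ t - x₁ t) s r β * (r - s) ^ β :=
    hd.norm_sub_le_holderNorm_mul le_rfl hsr le_rfl
  have hΔₛ : ‖x₂ s - x₁ s‖ ≤ supNorm (fun t => x₂ t - x₁ t) s r :=
    hd.norm_le_supNorm hβ0.le (left_mem_Icc.2 hsr.le)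
  have hd₁ := (hx₁.mono has hrb).norm_sub_le_holderNorm_mul le_rfl hsr le_rfl
  have hd₂ := (hx₂.mono has hrb).norm_sub_le_holderNorm_mul le_rfl hsr le_rfl
  have hH₁ : 0 ≤ holderNorm x₁ s r β := holderNorm_nonneg
  have hH₂ : 0 ≤ holderNorm x₂ s r β := holderNorm_nonneg
  calc _ ≤ _ := hfour
    _ ≤ M₁ * (holderNorm (fun t => x₂ t - x₁ t) s r β * (r - s) ^ β) +
          M₂ * (holderNorm x₁ s r β * (r - s) ^ β + holderNorm x₂ s r β * (r - s) ^ β) *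
            supNorm (fun t => x₂ t - x₁ t) s r := by gcongr
    _ = _ := by ring

theorem four_point_holder_estimate_C2
    {B₁ B₂ : Type*} [NormedAddCommGroup B₁] [NormedSpace ℝ B₁]
    [NormedAddCommGroup B₂] [NormedSpace ℝ B₂]
    (f : B₁ → B₂) (hf : ContDiff ℝ 2 f)
    (M₁ M₂ : ℝ)
    (hM₁ : ∀ x : B₁, ‖fderiv ℝ f x‖ ≤ M₁)
    (hM₂ : ∀ x : B₁, ‖fderiv ℝ (fderiv ℝ f) x‖ ≤ M₂)
    (β a b : ℝ) (hβ0 : 0 < β) (hβ1 : β ≤ 1) (hab : a < b)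
    (x₁ x₂ : ℝ → B₁) (hx₁ : HolderOn x₁ a b β) (hx₂ : HolderOn x₂ a b β) :
    ∀ s r : ℝ, a ≤ s → s < r → r ≤ b →
      ‖f (x₂ r) - f (x₁ r) - f (x₂ s) + f (x₁ s)‖ ≤
        M₁ * holderNorm (fun t => x₂ t - x₁ t) s r β * (r - s) ^ β +
          M₂ * (holderNorm x₁ s r β + holderNorm x₂ s r β) *
            supNorm (fun t => x₂ t - x₁ t) s r * (r - s) ^ β :=
  four_point_holder_estimate_C2_general f hf M₁ M₂ hM₁ hM₂ β a b hβ0 x₁ x₂ hx₁ hx₂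
end
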